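/- If p is not injective, then p is not injective on some closed interval of length ℓ − 2π: there exist a ∈ ℝ and s ≠ t in [a, a + ℓ − 2π] with p(s) = p(t). -/

import Mathlib

open Real Set intervalIntegral

lemma expRatio (f f' h : ℝ → ℂ) (hd : ∀ θ ∈ Icc (0:ℝ) 1, HasDerivAt f (f' θ) θ)
    (hh : Continuous h) (hfh : ∀ θ ∈ Icc (0:ℝ) 1, f' θ = h θ * f θ) :
    f 1 = f 0 * Complex.exp (∫ θ in (0:ℝ)..1, h θ) := by
  set F : ℝ → ℂ := fun θ => ∫ s in (0:ℝ)..θ, h s with hF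
  have hFd : ∀ θ : ℝ, HasDerivAt F (h θ) θ := by
    intro θ
    exact integral_hasDerivAt_right (hh.intervalIntegrable _ _)
      (hh.stronglyMeasurable.stronglyMeasurableAtFilter) hh.continuousAt
  have hG : ∀ θ ∈ Icc (0:ℝ) 1, HasDerivAt (fun t => f t * Complex.exp (-F t)) 0 θ := by
    intro θ hθ
    have h1 := (hd θ hθ).mul (((hFd θ).neg).cexp)
    have : f' θ * Complex.exp (-F θ) + f θ * (Complex.exp (-F θ) * -h θ) = 0 := by
      rw [hfh θ hθ]; ring
    rw [show (f' θ * Complex.exp ((-F) θ) + f θ * (Complex.exp ((-F) θ) * -h θ)) = 0 from this] at h1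
    exact h1
  have hcont : ContinuousOn (fun t => f t * Complex.exp (-F t)) (Icc 0 1) := by
    intro θ hθ
    exact (ContinuousAt.mul ((hd θ hθ).continuousAt) (((hFd θ).neg).cexp.continuousAt)).continuousWithinAt
  have hconst := constant_of_has_deriv_right_zero hcont
    (fun x hx => (hG x (Ico_subset_Icc_self hx)).hasDerivWithinAt) 1 (right_mem_Icc.2 zero_le_one)
  have hF0 : F 0 = 0 := integral_same
  have : f 1 * Complex.exp (-F 1) = f 0 := by simpa [hF0] using hconst
  have := congrArg (fun z => z * Complex.exp (F 1)) this
  rw [mul_assoc, ← Complex.exp_add] at this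
  simp at this
  simpa [hF] using this

/-- Key topological lemma: a smooth path `B` from `-w` to `w` must contain two
parameters `y ≤ x` with `B x - B y = w`. -/
lemma chord_lemma (B B' : ℝ → ℂ) (w : ℂ) (Λ : ℝ)
    (hΛ : 0 < Λ) (hw : w ≠ 0)
    (hD : ∀ x, HasDerivAt B (B' x) x) (hB'c : Continuous B')
    (h0 : B 0 = -w) (h1 : B Λ = w)
    (hne : ∀ x y : ℝ, 0 ≤ y → y ≤ x → x ≤ Λ → B x - B y - w ≠ 0) : False := by
  have hBc : Continuous B := by
    have : Differentiable ℝ B := fun x => (hD x).differentiableAt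
    exact this.continuous
  -- clamp
  set cl : ℝ → ℝ := fun r => min 1 (max 0 r) with hcl
  have hclc : Continuous cl := by fun_prop
  have hclmem : ∀ r, cl r ∈ Icc (0:ℝ) 1 := by
    intro r
    exact ⟨le_min zero_le_one (le_max_left 0 r), min_le_left _ _⟩
  have hclid : ∀ r ∈ Icc (0:ℝ) 1, cl r = r := by
    intro r hr
    simp [hcl, max_eq_right hr.1, min_eq_right hr.2]
  -- the two families of affine paths
  set aa : ℝ → ℝ := fun σ => Λ * (1 - σ / 2) with haa
  set bb : ℝ → ℝ := fun σ => σ * (Λ / 2) with hbb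
  set x1 : ℝ → ℝ → ℝ := fun σ θ => aa σ * θ with hx1
  set y1 : ℝ → ℝ → ℝ := fun σ θ => bb σ * θ with hy1
  set x2 : ℝ → ℝ → ℝ := fun σ θ => aa σ + (Λ - aa σ) * θ with hx2
  set y2 : ℝ → ℝ → ℝ := fun σ θ => bb σ + (Λ - bb σ) * θ with hy2
  set f1 : ℝ → ℝ → ℂ := fun σ θ => B (x1 σ θ) - B (y1 σ θ) - w with hf1
  set f2 : ℝ → ℝ → ℂ := fun σ θ => B (x2 σ θ) - B (y2 σ θ) - w with hf2
  set n1 : ℝ → ℝ → ℂ := fun σ θ => B' (x1 σ θ) * (aa σ : ℂ) - B' (y1 σ θ) * (bb σ : ℂ) with hn1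
  set n2 : ℝ → ℝ → ℂ := fun σ θ => B' (x2 σ θ) * ((Λ - aa σ : ℝ) : ℂ) - B' (y2 σ θ) * ((Λ - bb σ : ℝ) : ℂ) with hn2
  -- membership facts
  have hab : ∀ σ ∈ Icc (0:ℝ) 1, 0 ≤ bb σ ∧ bb σ ≤ aa σ ∧ aa σ ≤ Λ := by
    intro σ hσ
    obtain ⟨h01, h11⟩ := hσ
    refine ⟨by positivity, ?_, ?_⟩
    · simp only [haa, hbb]; nlinarith
    · simp only [haa]; nlinarith
  have hmem1 : ∀ σ ∈ Icc (0:ℝ) 1, ∀ θ ∈ Icc (0:ℝ) 1,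
      0 ≤ y1 σ θ ∧ y1 σ θ ≤ x1 σ θ ∧ x1 σ θ ≤ Λ := by
    intro σ hσ θ hθ
    obtain ⟨hb0, hba, haΛ⟩ := hab σ hσ
    obtain ⟨ht0, ht1⟩ := hθ
    refine ⟨by positivity, ?_, ?_⟩
    · simp only [hx1, hy1]; nlinarith
    · simp only [hx1]; nlinarith
  have hmem2 : ∀ σ ∈ Icc (0:ℝ) 1, ∀ θ ∈ Icc (0:ℝ) 1,
      0 ≤ y2 σ θ ∧ y2 σ θ ≤ x2 σ θ ∧ x2 σ θ ≤ Λ := by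
    intro σ hσ θ hθ
    obtain ⟨hb0, hba, haΛ⟩ := hab σ hσ
    obtain ⟨ht0, ht1⟩ := hθ
    refine ⟨?_, ?_, ?_⟩
    · simp only [hy2]; nlinarith
    · simp only [hx2, hy2]; nlinarith
    · simp only [hx2]; nlinarith
  have hfne1 : ∀ σ ∈ Icc (0:ℝ) 1, ∀ θ ∈ Icc (0:ℝ) 1, f1 σ θ ≠ 0 := by
    intro σ hσ θ hθ
    obtain ⟨m1, m2, m3⟩ := hmem1 σ hσ θ hθ
    exact hne _ _ m1 m2 m3
  have hfne2 : ∀ σ ∈ Icc (0:ℝ) 1, ∀ θ ∈ Icc (0:ℝ) 1, f2 σ θ ≠ 0 := by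
    intro σ hσ θ hθ
    obtain ⟨m1, m2, m3⟩ := hmem2 σ hσ θ hθ
    exact hne _ _ m1 m2 m3
  -- the integrand
  set g : ℝ → ℝ → ℂ := fun σ θ => n1 σ θ / f1 σ θ + n2 σ θ / f2 σ θ with hg
  set I : ℝ → ℂ := fun τ => ∫ θ in (0:ℝ)..1, g (cl τ) (cl θ) with hI
  -- continuity of I
  have hgc : Continuous fun P : ℝ × ℝ => g (cl P.1) (cl P.2) := by
    have hc1 : Continuous fun P : ℝ × ℝ => cl P.1 := hclc.comp continuous_fst
    have hc2 : Continuous fun P : ℝ × ℝ => cl P.2 := hclc.comp continuous_snd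
    have haac : Continuous aa := by simp only [haa]; fun_prop
    have hbbc : Continuous bb := by simp only [hbb]; fun_prop
    have hX1 : Continuous fun P : ℝ × ℝ => x1 (cl P.1) (cl P.2) := by
      simp only [hx1]; exact (haac.comp hc1).mul hc2
    have hY1 : Continuous fun P : ℝ × ℝ => y1 (cl P.1) (cl P.2) := by
      simp only [hy1]; exact (hbbc.comp hc1).mul hc2
    have hX2 : Continuous fun P : ℝ × ℝ => x2 (cl P.1) (cl P.2) := by
      simp only [hx2]; exact (haac.comp hc1).add (((continuous_const.sub (haac.comp hc1))).mul hc2)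
    have hY2 : Continuous fun P : ℝ × ℝ => y2 (cl P.1) (cl P.2) := by
      simp only [hy2]; exact (hbbc.comp hc1).add (((continuous_const.sub (hbbc.comp hc1))).mul hc2)
    have hF1 : Continuous fun P : ℝ × ℝ => f1 (cl P.1) (cl P.2) := by
      simp only [hf1]; exact ((hBc.comp hX1).sub (hBc.comp hY1)).sub continuous_const
    have hF2 : Continuous fun P : ℝ × ℝ => f2 (cl P.1) (cl P.2) := by
      simp only [hf2]; exact ((hBc.comp hX2).sub (hBc.comp hY2)).sub continuous_const
    have hN1 : Continuous fun P : ℝ × ℝ => n1 (cl P.1) (cl P.2) := by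
      simp only [hn1]
      exact ((hB'c.comp hX1).mul ((Complex.continuous_ofReal).comp (haac.comp hc1))).sub
        ((hB'c.comp hY1).mul ((Complex.continuous_ofReal).comp (hbbc.comp hc1)))
    have hN2 : Continuous fun P : ℝ × ℝ => n2 (cl P.1) (cl P.2) := by
      simp only [hn2]
      exact ((hB'c.comp hX2).mul ((Complex.continuous_ofReal).comp
          (continuous_const.sub (haac.comp hc1)))).sub
        ((hB'c.comp hY2).mul ((Complex.continuous_ofReal).comp
          (continuous_const.sub (hbbc.comp hc1))))
    simp only [hg]
    exact (hN1.div hF1 (fun P => hfne1 _ (hclmem _) _ (hclmem _))).add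
      (hN2.div hF2 (fun P => hfne2 _ (hclmem _) _ (hclmem _)))
  have hr1 : Continuous fun P : ℝ × ℝ => n1 (cl P.1) (cl P.2) / f1 (cl P.1) (cl P.2) := by
    have hc1 : Continuous fun P : ℝ × ℝ => cl P.1 := hclc.comp continuous_fst
    have hc2 : Continuous fun P : ℝ × ℝ => cl P.2 := hclc.comp continuous_snd
    have haac : Continuous aa := by simp only [haa]; fun_prop
    have hbbc : Continuous bb := by simp only [hbb]; fun_prop
    have hX1 : Continuous fun P : ℝ × ℝ => x1 (cl P.1) (cl P.2) := by
      simp only [hx1]; exact (haac.comp hc1).mul hc2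
    have hY1 : Continuous fun P : ℝ × ℝ => y1 (cl P.1) (cl P.2) := by
      simp only [hy1]; exact (hbbc.comp hc1).mul hc2
    have hF1 : Continuous fun P : ℝ × ℝ => f1 (cl P.1) (cl P.2) := by
      simp only [hf1]; exact ((hBc.comp hX1).sub (hBc.comp hY1)).sub continuous_const
    have hN1 : Continuous fun P : ℝ × ℝ => n1 (cl P.1) (cl P.2) := by
      simp only [hn1]
      exact ((hB'c.comp hX1).mul ((Complex.continuous_ofReal).comp (haac.comp hc1))).sub
        ((hB'c.comp hY1).mul ((Complex.continuous_ofReal).comp (hbbc.comp hc1)))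
    exact hN1.div hF1 (fun P => hfne1 _ (hclmem _) _ (hclmem _))
  have hr2 : Continuous fun P : ℝ × ℝ => n2 (cl P.1) (cl P.2) / f2 (cl P.1) (cl P.2) := by
    have hc1 : Continuous fun P : ℝ × ℝ => cl P.1 := hclc.comp continuous_fst
    have hc2 : Continuous fun P : ℝ × ℝ => cl P.2 := hclc.comp continuous_snd
    have haac : Continuous aa := by simp only [haa]; fun_prop
    have hbbc : Continuous bb := by simp only [hbb]; fun_prop
    have hX2 : Continuous fun P : ℝ × ℝ => x2 (cl P.1) (cl P.2) := by
      simp only [hx2]; exact (haac.comp hc1).add (((continuous_const.sub (haac.comp hc1))).mul hc2)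
    have hY2 : Continuous fun P : ℝ × ℝ => y2 (cl P.1) (cl P.2) := by
      simp only [hy2]; exact (hbbc.comp hc1).add (((continuous_const.sub (hbbc.comp hc1))).mul hc2)
    have hF2 : Continuous fun P : ℝ × ℝ => f2 (cl P.1) (cl P.2) := by
      simp only [hf2]; exact ((hBc.comp hX2).sub (hBc.comp hY2)).sub continuous_const
    have hN2 : Continuous fun P : ℝ × ℝ => n2 (cl P.1) (cl P.2) := by
      simp only [hn2]
      exact ((hB'c.comp hX2).mul ((Complex.continuous_ofReal).comp
          (continuous_const.sub (haac.comp hc1)))).sub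
        ((hB'c.comp hY2).mul ((Complex.continuous_ofReal).comp
          (continuous_const.sub (hbbc.comp hc1))))
    exact hN2.div hF2 (fun P => hfne2 _ (hclmem _) _ (hclmem _))
  have hIc : Continuous I := by
    simp only [hI]
    exact continuous_parametric_intervalIntegral_of_continuous'
      (f := fun τ θ => g (cl τ) (cl θ)) (μ := MeasureTheory.volume) hgc 0 1
  -- derivatives of the path families
  have hder1 : ∀ σ θ : ℝ, HasDerivAt (fun t => f1 σ t) (n1 σ θ) θ := by
    intro σ θ
    have hx : HasDerivAt (fun t : ℝ => aa σ * t) (aa σ) θ := by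
      simpa using (hasDerivAt_id θ).const_mul (aa σ)
    have hy : HasDerivAt (fun t : ℝ => bb σ * t) (bb σ) θ := by
      simpa using (hasDerivAt_id θ).const_mul (bb σ)
    have h1 : HasDerivAt (fun t : ℝ => B (aa σ * t)) (aa σ • B' (x1 σ θ)) θ :=
      (hD (x1 σ θ)).scomp θ hx
    have h2 : HasDerivAt (fun t : ℝ => B (bb σ * t)) (bb σ • B' (y1 σ θ)) θ :=
      (hD (y1 σ θ)).scomp θ hy
    have := (h1.sub h2).sub_const w
    convert this using 1
    rfl
    rfl
    rw [hn1]; simp only [Complex.real_smul]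
    ring
  have hder2 : ∀ σ θ : ℝ, HasDerivAt (fun t => f2 σ t) (n2 σ θ) θ := by
    intro σ θ
    have hx : HasDerivAt (fun t : ℝ => aa σ + (Λ - aa σ) * t) (Λ - aa σ) θ := by
      simpa using ((hasDerivAt_id θ).const_mul (Λ - aa σ)).const_add (aa σ)
    have hy : HasDerivAt (fun t : ℝ => bb σ + (Λ - bb σ) * t) (Λ - bb σ) θ := by
      simpa using ((hasDerivAt_id θ).const_mul (Λ - bb σ)).const_add (bb σ)
    have h1 : HasDerivAt (fun t : ℝ => B (aa σ + (Λ - aa σ) * t)) ((Λ - aa σ) • B' (x2 σ θ)) θ :=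
      (hD (x2 σ θ)).scomp θ hx
    have h2 : HasDerivAt (fun t : ℝ => B (bb σ + (Λ - bb σ) * t)) ((Λ - bb σ) • B' (y2 σ θ)) θ :=
      (hD (y2 σ θ)).scomp θ hy
    have := (h1.sub h2).sub_const w
    convert this using 1
    rfl
    rfl
    rw [hn2]; simp only [Complex.real_smul]
    ring
  -- continuity of the clamped integrands, for fixed σ
  have hcA : ∀ σ ∈ Icc (0:ℝ) 1, Continuous fun θ => n1 σ (cl θ) / f1 σ (cl θ) := by
    intro σ hσ
    have : (fun θ => n1 σ (cl θ) / f1 σ (cl θ))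
        = (fun P : ℝ × ℝ => n1 (cl P.1) (cl P.2) / f1 (cl P.1) (cl P.2)) ∘ (fun θ => (σ, θ)) := by
      funext θ; simp [Function.comp, hclid σ hσ]
    rw [this]
    exact hr1.comp (continuous_const.prodMk continuous_id)
  have hcB : ∀ σ ∈ Icc (0:ℝ) 1, Continuous fun θ => n2 σ (cl θ) / f2 σ (cl θ) := by
    intro σ hσ
    have : (fun θ => n2 σ (cl θ) / f2 σ (cl θ))
        = (fun P : ℝ × ℝ => n2 (cl P.1) (cl P.2) / f2 (cl P.1) (cl P.2)) ∘ (fun θ => (σ, θ)) := by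
      funext θ; simp [Function.comp, hclid σ hσ]
    rw [this]
    exact hr2.comp (continuous_const.prodMk continuous_id)
  -- exp-ratio relations
  have hEA : ∀ σ ∈ Icc (0:ℝ) 1,
      f1 σ 1 = f1 σ 0 * Complex.exp (∫ θ in (0:ℝ)..1, n1 σ (cl θ) / f1 σ (cl θ)) := by
    intro σ hσ
    refine expRatio (f1 σ) (n1 σ) _ (fun θ _ => hder1 σ θ) (hcA σ hσ) ?_
    intro θ hθ
    rw [hclid θ hθ]
    exact (div_mul_cancel₀ _ (hfne1 σ hσ θ hθ)).symm
  have hEB : ∀ σ ∈ Icc (0:ℝ) 1,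
      f2 σ 1 = f2 σ 0 * Complex.exp (∫ θ in (0:ℝ)..1, n2 σ (cl θ) / f2 σ (cl θ)) := by
    intro σ hσ
    refine expRatio (f2 σ) (n2 σ) _ (fun θ _ => hder2 σ θ) (hcB σ hσ) ?_
    intro θ hθ
    rw [hclid θ hθ]
    exact (div_mul_cancel₀ _ (hfne2 σ hσ θ hθ)).symm
  -- endpoint values
  have hv10 : ∀ σ : ℝ, f1 σ 0 = -w := by
    intro σ; simp [hf1, hx1, hy1]
  have hv11 : ∀ σ : ℝ, f1 σ 1 = f2 σ 0 := by
    intro σ; simp [hf1, hf2, hx1, hy1, hx2, hy2]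
  have hv21 : ∀ σ : ℝ, f2 σ 1 = -w := by
    intro σ
    have e1 : x2 σ 1 = Λ := by simp only [hx2]; ring
    have e2 : y2 σ 1 = Λ := by simp only [hy2]; ring
    simp [hf2, e1, e2]
  -- I σ splits as a sum of the two integrals
  have hIsplit : ∀ σ ∈ Icc (0:ℝ) 1, I σ =
      (∫ θ in (0:ℝ)..1, n1 σ (cl θ) / f1 σ (cl θ))
      + (∫ θ in (0:ℝ)..1, n2 σ (cl θ) / f2 σ (cl θ)) := by
    intro σ hσ
    have : I σ = ∫ θ in (0:ℝ)..1, (n1 σ (cl θ) / f1 σ (cl θ) + n2 σ (cl θ) / f2 σ (cl θ)) := by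
      simp only [hI, hclid σ hσ, hg]
    rw [this]
    exact intervalIntegral.integral_add ((hcA σ hσ).intervalIntegrable 0 1)
      ((hcB σ hσ).intervalIntegrable 0 1)
  have hwne : -w ≠ 0 := neg_ne_zero.2 hw
  -- (F1): exp (I σ) = 1 on [0,1]
  have key : ∀ σ ∈ Icc (0:ℝ) 1, Complex.exp (I σ) = 1 := by
    intro σ hσ
    have e1 := hEA σ hσ
    have e2 := hEB σ hσ
    rw [hv10 σ, hv11 σ] at e1
    rw [hv21 σ] at e2
    rw [hIsplit σ hσ, Complex.exp_add]
    rw [e1] at e2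
    have : -w * (Complex.exp (∫ θ in (0:ℝ)..1, n1 σ (cl θ) / f1 σ (cl θ)) *
        Complex.exp (∫ θ in (0:ℝ)..1, n2 σ (cl θ) / f2 σ (cl θ))) = -w * 1 := by
      rw [mul_one]; rw [← mul_assoc]; exact e2.symm
    exact mul_left_cancel₀ hwne this
  have h01 : (0:ℝ) ∈ Icc (0:ℝ) 1 := ⟨le_refl 0, zero_le_one⟩
  have h11 : (1:ℝ) ∈ Icc (0:ℝ) 1 := ⟨zero_le_one, le_refl 1⟩
  -- (F3): I 1 = 0
  have ha1 : aa 1 = Λ / 2 := by simp only [haa]; ring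
  have hb1 : bb 1 = Λ / 2 := by simp only [hbb]; ring
  have key1 : I 1 = 0 := by
    have hpt : ∀ t : ℝ, g 1 t = 0 := by
      intro t
      have e1 : n1 1 t = 0 := by
        simp only [hn1, hx1, hy1, ha1, hb1, sub_self]
      have e2 : n2 1 t = 0 := by
        simp only [hn2, hx2, hy2, ha1, hb1, sub_self]
      simp [hg, e1, e2]
    have : I 1 = ∫ θ in (0:ℝ)..1, g 1 (cl θ) := by
      simp only [hI, hclid 1 h11]
    rw [this]
    simp only [hpt]
    simp
  -- (F2): I 0 ≠ 0
  have ha0 : aa 0 = Λ := by simp [haa]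
  have hb0 : bb 0 = 0 := by simp [hbb]
  have key0 : I 0 ≠ 0 := by
    have hpt : ∀ t : ℝ, g 0 t = 2 * (n1 0 t / f1 0 t) := by
      intro t
      have e1 : x2 0 t = Λ := by simp [hx2, ha0]
      have e2 : y2 0 t = Λ * t := by simp [hy2, hb0]
      have e3 : x1 0 t = Λ * t := by simp only [hx1, ha0]
      have e4 : y1 0 t = 0 := by simp [hy1, hb0]
      have eN : n2 0 t = -(n1 0 t) := by
        simp only [hn2, hn1, e1, e2, e3, e4, ha0, hb0, sub_self, sub_zero]
        push_cast
        ring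
      have eF : f2 0 t = -(f1 0 t) := by
        simp only [hf2, hf1, e1, e2, e3, e4, h0, h1]
        ring
      simp only [hg, eN, eF, neg_div_neg_eq]
      ring
    have hI0 : I 0 = 2 * ∫ θ in (0:ℝ)..1, n1 0 (cl θ) / f1 0 (cl θ) := by
      have : I 0 = ∫ θ in (0:ℝ)..1, g 0 (cl θ) := by
        simp only [hI, hclid 0 h01]
      rw [this]
      simp only [hpt]
      exact intervalIntegral.integral_const_mul 2 _
    have hf101 : f1 0 1 = w := by
      simp only [hf1, hx1, hy1, ha0, hb0, mul_one, zero_mul, h0, h1]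
      ring
    have e1 := hEA 0 h01
    rw [hv10 0, hf101] at e1
    -- w = -w * exp EA₀  ⇒ exp EA₀ = -1
    have hexp : Complex.exp (∫ θ in (0:ℝ)..1, n1 0 (cl θ) / f1 0 (cl θ)) = -1 := by
      have : -w * Complex.exp (∫ θ in (0:ℝ)..1, n1 0 (cl θ) / f1 0 (cl θ)) = -w * (-1) := by
        rw [← e1]; ring
      exact mul_left_cancel₀ hwne this
    intro hI0z
    rw [hI0] at hI0z
    have : (∫ θ in (0:ℝ)..1, n1 0 (cl θ) / f1 0 (cl θ)) = 0 := by
      rcases mul_eq_zero.1 hI0z with h2 | h2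
      · exact absurd h2 (by norm_num)
      · exact h2
    rw [this] at hexp
    rw [Complex.exp_zero] at hexp
    exact absurd hexp (by norm_num)
  -- endgame: intermediate value theorem on the imaginary part
  set ν : ℝ → ℝ := fun τ => (I τ).im with hν
  have hνc : Continuous ν := Complex.continuous_im.comp hIc
  have hν1 : ν 1 = 0 := by
    have : ν 1 = (I 1).im := rfl
    rw [this, key1]
    rfl
  obtain ⟨n₀, hn₀⟩ := Complex.exp_eq_one_iff.1 (key 0 h01)
  have hn₀ne : n₀ ≠ 0 := by
    rintro rfl
    rw [hn₀] at key0
    simp at key0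
  have hν0 : ν 0 = n₀ * (2 * π) := by
    simp only [hν, hn₀]
    simp [Complex.mul_im]
  have hmul : ∀ τ ∈ Icc (0:ℝ) 1, ∃ m : ℤ, ν τ = m * (2 * π) := by
    intro τ hτ
    obtain ⟨m, hm⟩ := Complex.exp_eq_one_iff.1 (key τ hτ)
    refine ⟨m, ?_⟩
    simp only [hν, hm]
    simp [Complex.mul_im]
  have hpi : (0:ℝ) < π := pi_pos
  have hivt : ∀ c : ℝ, c ∈ uIcc (ν 0) (ν 1) → ∃ τ ∈ Icc (0:ℝ) 1, ν τ = c := by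
    intro c hc
    have h := intermediate_value_uIcc (a := (0:ℝ)) (b := 1) (f := ν) hνc.continuousOn
    obtain ⟨τ, hτ, hτv⟩ := h hc
    rw [uIcc_of_le zero_le_one] at hτ
    exact ⟨τ, hτ, hτv⟩
  have hodd : ∀ m : ℤ, (m : ℝ) * (2 * π) ≠ π ∧ (m : ℝ) * (2 * π) ≠ -π := by
    intro m
    constructor
    · intro h
      have : ((2 * m - 1 : ℤ) : ℝ) * π = 0 := by push_cast; linarith
      rcases mul_eq_zero.1 this with h' | h'
      · have : (2 * m - 1 : ℤ) = 0 := by exact_mod_cast h'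
        omega
      · exact pi_ne_zero h'
    · intro h
      have : ((2 * m + 1 : ℤ) : ℝ) * π = 0 := by push_cast; linarith
      rcases mul_eq_zero.1 this with h' | h'
      · have : (2 * m + 1 : ℤ) = 0 := by exact_mod_cast h'
        omega
      · exact pi_ne_zero h'
  rcases hn₀ne.lt_or_gt with hneg | hpos
  · -- n₀ < 0 : use c = -π
    have hn₀le : (n₀ : ℝ) ≤ -1 := by exact_mod_cast Int.le_sub_one_of_lt hneg
    have hc : -π ∈ uIcc (ν 0) (ν 1) := by
      rw [mem_uIcc]
      left
      constructor
      · rw [hν0]; nlinarith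
      · rw [hν1]; linarith
    obtain ⟨τ, hτ, hτv⟩ := hivt _ hc
    obtain ⟨m, hm⟩ := hmul τ hτ
    exact (hodd m).2 (by rw [← hm, hτv])
  · -- 0 < n₀ : use c = π
    have hn₀ge : (1:ℝ) ≤ (n₀ : ℝ) := by exact_mod_cast hpos
    have hc : π ∈ uIcc (ν 0) (ν 1) := by
      rw [mem_uIcc]
      right
      constructor
      · rw [hν1]; linarith
      · rw [hν0]; nlinarith
    obtain ⟨τ, hτ, hτv⟩ := hivt _ hc
    obtain ⟨m, hm⟩ := hmul τ hτ
    exact (hodd m).1 (by rw [← hm, hτv])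

/-- If `p` is not injective, then `p` is not injective on some closed
interval of length `ℓ - 2π`. -/
theorem stmt_8 (ℓ : ℝ) (p : ℝ → ℝ × ℝ)
    (hℓ : 2 * Real.pi < ℓ)
    (hsmooth : ContDiff ℝ (⊤ : ℕ∞) p)
    (hspeed : ∀ s : ℝ, ((deriv p s).1) ^ 2 + ((deriv p s).2) ^ 2 = 1)
    (hper : ∀ s : ℝ, p (s + ℓ) = p s + (2 * Real.pi, 0))
    (hni : ¬ Function.Injective p) :
    ∃ a s t : ℝ, s ∈ Set.Icc a (a + (ℓ - 2 * Real.pi)) ∧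
      t ∈ Set.Icc a (a + (ℓ - 2 * Real.pi)) ∧ s ≠ t ∧ p s = p t := by
  have hpi : (0:ℝ) < π := pi_pos
  have hℓpos : (0:ℝ) < ℓ := by linarith
  -- complexification
  set q : ℝ → ℂ := fun x => ((p x).1 : ℂ) + ((p x).2 : ℂ) * Complex.I with hq
  set q' : ℝ → ℂ := fun x => ((deriv p x).1 : ℂ) + ((deriv p x).2 : ℂ) * Complex.I with hq'
  have hpdiff : Differentiable ℝ p := hsmooth.differentiable (by simp)
  have hpd : ∀ x, HasDerivAt p (deriv p x) x := fun x => (hpdiff x).hasDerivAt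
  have hu : ∀ x, HasDerivAt (fun y => (p y).1) (deriv p x).1 x := fun x =>
    (ContinuousLinearMap.fst ℝ ℝ ℝ).hasFDerivAt.comp_hasDerivAt x (hpd x)
  have hv : ∀ x, HasDerivAt (fun y => (p y).2) (deriv p x).2 x := fun x =>
    (ContinuousLinearMap.snd ℝ ℝ ℝ).hasFDerivAt.comp_hasDerivAt x (hpd x)
  have hqd : ∀ x, HasDerivAt q (q' x) x := by
    intro x
    exact ((hu x).ofReal_comp).add (((hv x).ofReal_comp).mul_const Complex.I)
  have hdpc : Continuous (deriv p) := hsmooth.continuous_deriv (by simp)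
  have hq'c : Continuous q' := by
    simp only [hq']
    fun_prop
  have hq'norm : ∀ x, ‖q' x‖ = 1 := by
    intro x
    simp only [hq', Complex.norm_add_mul_I]
    rw [hspeed x]
    exact Real.sqrt_one
  have hqdiff : Differentiable ℝ q := fun x => (hqd x).differentiableAt
  have hqLip : ∀ x y : ℝ, ‖q x - q y‖ ≤ |x - y| := by
    have hL : LipschitzWith 1 q := by
      apply lipschitzWith_of_nnnorm_deriv_le hqdiff
      intro x
      rw [(hqd x).deriv]
      rw [← NNReal.coe_le_coe, coe_nnnorm, hq'norm x]
      norm_num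
    intro x y
    have := hL.dist_le_mul x y
    simpa [dist_eq_norm, Real.dist_eq] using this
  have hqper : ∀ x : ℝ, q (x + ℓ) = q x + ((2*π : ℝ) : ℂ) := by
    intro x
    simp only [hq, hper x, Prod.fst_add, Prod.snd_add]
    push_cast
    ring
  have hqshift : ∀ (n : ℕ) (x : ℝ), q (x + n * ℓ) = q x + ((2*π*n : ℝ) : ℂ) := by
    intro n
    induction n with
    | zero => intro x; simp
    | succ k ih =>
      intro x
      have harg : x + ((k:ℕ)+1 : ℕ) * ℓ = (x + k * ℓ) + ℓ := by push_cast; ring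
      rw [harg, hqper, ih]
      push_cast
      ring
  have hqp : ∀ x y : ℝ, q x = q y → p x = p y := by
    intro x y h
    have hre := congrArg Complex.re h
    have him := congrArg Complex.im h
    simp only [hq, Complex.add_re, Complex.ofReal_re, Complex.mul_re, Complex.ofReal_im,
      Complex.I_re, Complex.I_im, mul_zero, mul_one, zero_mul, sub_zero, zero_sub, zero_add,
      Complex.add_im, Complex.mul_im, add_zero] at hre him
    exact Prod.ext (by linarith) (by linarith)
  -- the set of gaps between double points
  set S : Set ℝ := {g | 0 < g ∧ ∃ z : ℝ, p (z + g) = p z} with hS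
  have hSne : S.Nonempty := by
    obtain ⟨x, y, hxy, hne'⟩ := Function.not_injective_iff.1 hni
    rcases hne'.lt_or_gt with h | h
    · exact ⟨y - x, by linarith, x, by rw [show x + (y-x) = y by ring]; exact hxy.symm⟩
    · exact ⟨x - y, by linarith, y, by rw [show y + (x-y) = x by ring]; exact hxy⟩
  -- band exclusion
  have hband : ∀ (n : ℕ), 1 ≤ n → ∀ g ∈ S, 2*π*n ≤ |n * ℓ - g| := by
    intro n hn g hg
    obtain ⟨hgpos, z, hz⟩ := hg
    have h1 : q (z + n*ℓ) = q z + ((2*π*n : ℝ) : ℂ) := hqshift n z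
    have h2 : q (z + g) = q z := by simp only [hq, hz]
    have hl := hqLip (z + n*ℓ) (z + g)
    rw [h1, h2] at hl
    have hnorm : ‖(q z + ((2*π*n:ℝ):ℂ)) - q z‖ = 2*π*n := by
      rw [add_sub_cancel_left, Complex.norm_real, Real.norm_eq_abs,
        abs_of_nonneg (by positivity)]
    rw [hnorm] at hl
    calc 2*π*n ≤ |z + n*ℓ - (z + g)| := hl
      _ = |n*ℓ - g| := by ring_nf
  -- main case split
  by_cases hA : ∃ g ∈ S, g ≤ ℓ - 2*π
  · obtain ⟨g, ⟨hgpos, z, hz⟩, hgle⟩ := hA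
    refine ⟨z, z, z + g, ⟨le_refl z, by linarith⟩, ⟨by linarith, by linarith⟩, ?_, hz.symm⟩
    intro h
    have : g = 0 := by linarith [congrArg id h]
    · exact absurd this (ne_of_gt hgpos)
  · push_neg at hA
    exfalso
    have hS2 : ∀ g ∈ S, ℓ + 2*π ≤ g := by
      intro g hg
      have hb := hband 1 (le_refl 1) g hg
      push_cast at hb
      have hgt := hA g hg
      by_contra hlt
      push_neg at hlt
      have hcon : |1*ℓ - g| < 2*π*1 := by
        rw [abs_lt]
        constructor <;> linarith
      linarith
    have hbdd : BddBelow S := ⟨0, fun g hg => le_of_lt hg.1⟩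
    set δ := sInf S with hδ
    have hδlb : ∀ g ∈ S, δ ≤ g := fun g hg => csInf_le hbdd hg
    have hδge : ℓ + 2*π ≤ δ := le_csInf hSne hS2
    obtain ⟨d, hdS, hdlt⟩ : ∃ d ∈ S, d < δ + 1 := by
      by_contra hcon
      push_neg at hcon
      have : δ + 1 ≤ δ := le_csInf hSne hcon
      linarith
    obtain ⟨hdpos, z, hz⟩ := hdS
    have hdS' : d ∈ S := ⟨hdpos, z, hz⟩
    have hqz : q (z + d) = q z := by simp only [hq, hz]
    have hdge : ℓ + 2*π ≤ d := hS2 d hdS'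
    set K : ℕ := ⌊d / ℓ⌋₊ with hK
    have hKle : (K:ℝ) * ℓ ≤ d := by
      have h := Nat.floor_le (le_of_lt (div_pos hdpos hℓpos))
      calc (K:ℝ)*ℓ ≤ (d/ℓ)*ℓ := mul_le_mul_of_nonneg_right h hℓpos.le
        _ = d := by field_simp
    have hKgt : d < ((K:ℝ)+1) * ℓ := by
      have h := Nat.lt_floor_add_one (d/ℓ)
      calc d = (d/ℓ)*ℓ := by field_simp
        _ < ((K:ℝ)+1)*ℓ := by
          apply mul_lt_mul_of_pos_right _ hℓpos
          exact_mod_cast h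
    have hK1 : 1 ≤ K := by
      rw [hK]
      apply Nat.le_floor
      rw [Nat.cast_one, le_div_iff₀ hℓpos]
      linarith
    have hK1' : (1:ℝ) ≤ (K:ℝ) := by exact_mod_cast hK1
    set e := d - K*ℓ with he
    have he1 : 2*π*K ≤ e := by
      have hb := hband K hK1 d hdS'
      rw [abs_sub_comm, abs_of_nonneg (by linarith)] at hb
      linarith
    have he2 : e ≤ ℓ - 2*π*((K:ℝ)+1) := by
      have hb := hband (K+1) (by omega) d hdS'
      push_cast at hb
      rw [abs_of_nonneg (by nlinarith)] at hb
      nlinarith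
    have hepos : 0 < e := by nlinarith
    have heq : q (z + e) = q z - ((2*π*K : ℝ) : ℂ) := by
      have h := hqshift K (z + e)
      rw [show z + e + K*ℓ = z + d by rw [he]; ring, hqz] at h
      rw [eq_sub_iff_add_eq]
      exact h.symm
    have hπ3 : (3:ℝ) < π := pi_gt_three
    clear_value δ K e q q'
    clear hz hqz hq hq'
    have he2π : 2*π ≤ e := by nlinarith
    -- parity split
    rcases Nat.even_or_odd K with ⟨M, hM⟩ | ⟨M, hM⟩
    · -- K even, K = M + M, M ≥ 1
      have hM1 : 1 ≤ M := by omega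
      have hM1' : (1:ℝ) ≤ (M:ℝ) := by exact_mod_cast hM1
      have hMK : (K:ℝ) = 2*(M:ℝ) := by rw [hM]; push_cast; ring
      have hMl : ℓ ≤ (M:ℝ)*ℓ := by nlinarith
      set w : ℂ := ((-(2*π*(M:ℝ)) : ℝ) : ℂ) with hw
      clear_value w
      have hwne : w ≠ 0 := by
        rw [hw, Complex.ofReal_ne_zero]
        nlinarith
      refine chord_lemma (fun x => q (z + x) - q z - w) (fun x => q' (z + x)) w e
        hepos hwne ?_ ?_ ?_ ?_ ?_
      · intro x
        have hin : HasDerivAt (fun t : ℝ => z + t) 1 x := (hasDerivAt_id x).const_add z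
        have hcomp := ((hqd (z + x)).scomp x hin)
        simpa using (hcomp.sub_const (q z)).sub_const w
      · have hcz : Continuous fun x : ℝ => z + x := by fun_prop
        exact hq'c.comp hcz
      · show q (z + 0) - q z - w = -w
        simp
      · show q (z + e) - q z - w = w
        rw [heq, hw]
        push_cast [hMK]
        ring
      · intro x y h0y hyx hxe hcon
        have hcon' : q (z + x) - q z - w - (q (z + y) - q z - w) - w = 0 := hcon
        have hxy : q (z + x) = q (z + y) + w := by linear_combination hcon'
        have hcol : q ((z + x) + (M:ℕ)*ℓ) = q (z + y) := by
          rw [hqshift M (z+x), hxy, hw]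
          push_cast
          ring
        have hp : p ((z + x) + (M:ℕ)*ℓ) = p (z + y) := hqp _ _ hcol
        have hGpos : 0 < (M:ℝ)*ℓ + x - y := by linarith
        have hGS : ((M:ℝ)*ℓ + x - y) ∈ S := by
          refine ⟨hGpos, z + y, ?_⟩
          rw [show z + y + ((M:ℝ)*ℓ + x - y) = (z + x) + (M:ℕ)*ℓ by push_cast; ring]
          exact hp
        have hle := hδlb _ hGS
        have hde : d = 2*((M:ℝ)*ℓ) + e := by rw [he]; rw [hMK]; ring
        linarith only [hle, hdlt, hde, hMl, h0y, hxe, hπ3, hℓ]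
    · -- K odd, K = 2M + 1
      have hMK : (K:ℝ) = 2*(M:ℝ)+1 := by rw [hM]; push_cast; ring
      have hM0 : (0:ℝ) ≤ (M:ℝ) := Nat.cast_nonneg M
      set w : ℂ := ((2*π*((M:ℝ)+1) : ℝ) : ℂ) with hw
      clear_value w
      have hwne : w ≠ 0 := by
        rw [hw, Complex.ofReal_ne_zero]
        nlinarith
      have hΛpos : 0 < ℓ - e := by nlinarith
      refine chord_lemma (fun x => q (z + e + x) - q (z + e) - w) (fun x => q' (z + e + x))
        w (ℓ - e) hΛpos hwne ?_ ?_ ?_ ?_ ?_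
      · intro x
        have hin : HasDerivAt (fun t : ℝ => z + e + t) 1 x := (hasDerivAt_id x).const_add (z + e)
        have hcomp := ((hqd (z + e + x)).scomp x hin)
        simpa using (hcomp.sub_const (q (z + e))).sub_const w
      · have hcz : Continuous fun x : ℝ => z + e + x := by fun_prop
        exact hq'c.comp hcz
      · show q (z + e + 0) - q (z + e) - w = -w
        simp
      · show q (z + e + (ℓ - e)) - q (z + e) - w = w
        rw [show z + e + (ℓ - e) = z + ℓ by ring, hqper, heq, hw]
        push_cast [hMK]
        ring
      · intro x y h0y hyx hxΛ hcon
        have hcon' : q (z + e + x) - q (z + e) - w - (q (z + e + y) - q (z + e) - w) - w = 0 := hcon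
        have hxy : q (z + e + x) = q (z + e + y) + w := by linear_combination hcon'
        have hcol : q ((z + e + y) + ((M:ℕ)+1:ℕ)*ℓ) = q (z + e + x) := by
          rw [hqshift (M+1) (z+e+y), hxy, hw]
          push_cast
          ring
        have hp : p ((z + e + y) + ((M:ℕ)+1:ℕ)*ℓ) = p (z + e + x) := hqp _ _ hcol
        have hMl0 : 0 ≤ (M:ℝ)*ℓ := mul_nonneg (Nat.cast_nonneg M) hℓpos.le
        have hGpos : 0 < ((M:ℝ)+1)*ℓ + y - x := by linarith
        have hGS : (((M:ℝ)+1)*ℓ + y - x) ∈ S := by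
          refine ⟨hGpos, z + e + x, ?_⟩
          rw [show z + e + x + (((M:ℝ)+1)*ℓ + y - x) = (z + e + y) + ((M:ℕ)+1:ℕ)*ℓ by push_cast; ring]
          exact hp
        have hle := hδlb _ hGS
        have hde : d = 2*((M:ℝ)*ℓ) + ℓ + e := by rw [he, hMK]; ring
        linarith only [hle, hdlt, hde, he2π, hMl0, hyx, h0y, hxΛ, hπ3, hepos]
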